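/- arXiv:2302.03167 — 7 statements merged into one kernel-verified Lean document; each statement's English description precedes it below -/
import Mathlib

section
/- For every class M of morphisms in a cocomplete locally small category, there exists a superclass N ⊇ M such that N is strong and the N-injective objects are exactly the M-orthogonal objects. Moreover, if M is a set, N can be chosen to be a set. Concretely, N = M ∪ { f' | f ∈ M }, where for f : A → B the morphism f' : B ⊔_A B → B is the codiagonal collapsing the two copies of B. -/
/-!
Injectivity to `codiag f` says that any two extensions of a map along `f` agree, since they
glue to a map out of `B ⊔_A B`. Hence `X` is injective to both `f` and `codiag f` exactly when
it is orthogonal to `f`. As `codiag f` is split by either coprojection, it is epi, so injectivity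
to it is already orthogonality, which makes the enlarged class strong.
-/

open CategoryTheory Limits

universe v u

variable {C : Type u} [Category.{v} C]

/-- `X` is injective to `f` if every map from the domain of `f` to `X` extends along `f`. -/
def Inj {A B : C} (f : A ⟶ B) (X : C) : Prop :=
  ∀ a : A ⟶ X, ∃ b : B ⟶ X, f ≫ b = a

/-- `X` is orthogonal to `f` if every map from the domain of `f` to `X` extends uniquely. -/
def Orth {A B : C} (f : A ⟶ B) (X : C) : Prop :=
  ∀ a : A ⟶ X, ∃! b : B ⟶ X, f ≫ b = a

/-- `X` is injective to every morphism of the class `M`. -/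
def MInj (M : MorphismProperty C) (X : C) : Prop :=
  ∀ ⦃A B : C⦄ (f : A ⟶ B), M f → Inj f X

/-- `X` is orthogonal to every morphism of the class `M`. -/
def MOrth (M : MorphismProperty C) (X : C) : Prop :=
  ∀ ⦃A B : C⦄ (f : A ⟶ B), M f → Orth f X

/-- A class of morphisms is strong if its injectivity class coincides with its
orthogonality class. -/
def Strong (M : MorphismProperty C) : Prop := ∀ X : C, MInj M X ↔ MOrth M X

section Lifting

variable {A B X : C}

theorem Orth.inj {f : A ⟶ B} (h : Orth f X) : Inj f X :=
  fun a => (h a).exists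

theorem Inj.orth_of_epi {f : A ⟶ B} [Epi f] (h : Inj f X) : Orth f X := fun a => by
  obtain ⟨b, hb⟩ := h a
  exact ⟨b, hb, fun b' hb' => (cancel_epi f).mp (hb'.trans hb.symm)⟩

end Lifting

variable [HasPushouts C]

/-- The codiagonal `B ⊔_A B ⟶ B` of a morphism `f : A ⟶ B`, collapsing the two
copies of `B` into one. -/
noncomputable def codiag {A B : C} (f : A ⟶ B) : pushout f f ⟶ B :=
  pushout.desc (𝟙 B) (𝟙 B) rfl

/-- The class `N = M ∪ { codiag f ∣ f ∈ M }`. -/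
inductive NClass (M : MorphismProperty C) : ∀ {X Y : C}, (X ⟶ Y) → Prop
  | base {A B : C} (f : A ⟶ B) : M f → NClass M f
  | codiagonal {A B : C} (f : A ⟶ B) : M f → NClass M (codiag f)

/-- `NClass M` as a morphism property. -/
def NProp (M : MorphismProperty C) : MorphismProperty C := fun _ _ f => NClass M f

section Codiagonal

variable {A B X : C} (f : A ⟶ B)

theorem inl_codiag : pushout.inl f f ≫ codiag f = 𝟙 B :=
  pushout.inl_desc _ _ _

theorem inr_codiag : pushout.inr f f ≫ codiag f = 𝟙 B :=
  pushout.inr_desc _ _ _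

instance : IsSplitEpi (codiag f) :=
  IsSplitEpi.mk' ⟨pushout.inl f f, inl_codiag f⟩

variable {f}

theorem Orth.inj_codiag (h : Orth f X) : Inj (codiag f) X := fun a => by
  refine ⟨pushout.inl f f ≫ a, pushout.hom_ext (by simp [reassoc_of% inl_codiag]) ?_⟩
  have hinl_inr : pushout.inl f f ≫ a = pushout.inr f f ≫ a :=
    (h (f ≫ pushout.inl f f ≫ a)).unique rfl (by rw [← pushout.condition_assoc])
  simp [reassoc_of% inr_codiag, ← hinl_inr]

theorem Inj.orth_of_inj_codiag (hf : Inj f X) (hcodiag : Inj (codiag f) X) : Orth f X :=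
  fun a => by
    obtain ⟨b, hb⟩ := hf a
    refine ⟨b, hb, fun b' hb' => ?_⟩
    obtain ⟨c, hc⟩ := hcodiag (pushout.desc b' b (hb'.trans hb.symm))
    calc b' = pushout.inl f f ≫ codiag f ≫ c := by rw [hc, pushout.inl_desc]
      _ = pushout.inr f f ≫ codiag f ≫ c := by
        simp [reassoc_of% inl_codiag, reassoc_of% inr_codiag]
      _ = b := by rw [hc, pushout.inr_desc]

end Codiagonal

theorem mInj_nProp_iff_mOrth {M : MorphismProperty C} {X : C} :
    MInj (NProp M) X ↔ MOrth M X := by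
  constructor
  · intro h A B f hf
    exact (h f (.base f hf)).orth_of_inj_codiag (h _ (.codiagonal f hf))
  · intro h A B g hg
    cases hg with
    | base _ hg => exact (h g hg).inj
    | codiagonal f hf => exact (h f hf).inj_codiag

/-- For every class `M` of morphisms, the superclass `N = M ∪ { codiag f ∣ f ∈ M }`
is strong and its injectivity class is exactly the orthogonality class of `M`. -/
theorem stmt_1 (M : MorphismProperty C) :
    M ≤ NProp M ∧ Strong (NProp M) ∧ ∀ X : C, MInj (NProp M) X ↔ MOrth M X := by
  refine ⟨fun _ _ f hf => .base f hf, fun X => ⟨?_, fun h _ _ g hg => (h g hg).inj⟩,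
    fun _ => mInj_nProp_iff_mOrth⟩
  intro h A B g hg
  cases hg with
  | base _ hg => exact mInj_nProp_iff_mOrth.mp h g hg
  | codiagonal f hf => exact (h _ (.codiagonal f hf)).orth_of_epi
end

section
/- Let M be a class of morphisms, f : X → Y a relative M-cell complex, and g : X → Z a map with Z injective to all morphisms in M. Then there exists h : Y → Z with h ∘ f = g. If moreover M is strong (equivalently, Z is orthogonal to all morphisms of M), then h is unique. -/
open CategoryTheory Limits

universe v u

variable {C : Type u} [Category.{v} C]

/-- The class of relative `M`-cell complexes: the least class of morphisms containing `M`
and closed under set-indexed coproducts, pushouts, and countable sequential compositions.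
(Coproducts and sequential compositions are phrased via colimit cocones, so that no
global existence assumptions on colimits are needed.) -/
inductive Cell (M : MorphismProperty C) : ∀ {X Y : C}, (X ⟶ Y) → Prop
  | base {A B : C} (f : A ⟶ B) : M f → Cell M f
  | coprod {I : Type v} (A B : I → C) (f : ∀ i, A i ⟶ B i)
      (h : ∀ i, Cell M (f i))
      (cA : Cofan A) (hcA : IsColimit cA) (cB : Cofan B) (hcB : IsColimit cB)
      (g : cA.pt ⟶ cB.pt) (hg : ∀ i, cA.inj i ≫ g = f i ≫ cB.inj i) : Cell M g
  | push {A B X Y : C} (f : A ⟶ B) (g : A ⟶ X) (g' : B ⟶ Y) (f' : X ⟶ Y)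
      (sq : IsPushout f g g' f') (hf : Cell M f) : Cell M f'
  | seq (F : ℕ ⥤ C) (h : ∀ n : ℕ, Cell M (F.map (homOfLE (Nat.le_succ n))))
      (c : Cocone F) (hc : IsColimit c) : Cell M (c.ι.app 0)

/-- `Cell M` as a morphism property. -/
def CellProp (M : MorphismProperty C) : MorphismProperty C := fun _ _ f => Cell M f


lemma cell_key {X Y : C} {M : MorphismProperty C} {f : X ⟶ Y} (hf : Cell M f) (Z : C) :
    (MInj M Z → Inj f Z) ∧ (MOrth M Z → Orth f Z) := by
  induction hf with
  | base f hf =>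
      exact ⟨fun hZ => hZ f hf, fun hZ => hZ f hf⟩
  | coprod A B f h cA hcA cB hcB g hg IH =>
      have ex : ∀ (ext : ∀ i, Inj (f i) Z) (a : cA.pt ⟶ Z),
          ∃ b : cB.pt ⟶ Z, g ≫ b = a ∧ ∀ i, cB.inj i ≫ b = (ext i (cA.inj i ≫ a)).choose := by
        intro ext a
        refine ⟨hcB.desc (Cofan.mk Z fun i => (ext i (cA.inj i ≫ a)).choose), ?_, fun i => hcB.fac _ ⟨i⟩⟩
        refine hcA.hom_ext fun ⟨i⟩ => ?_
        have h1 : cB.inj i ≫ hcB.desc (Cofan.mk Z fun i => (ext i (cA.inj i ≫ a)).choose)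
            = (ext i (cA.inj i ≫ a)).choose := hcB.fac _ ⟨i⟩
        have h2 := (ext i (cA.inj i ≫ a)).choose_spec
        show cA.inj i ≫ g ≫ _ = cA.inj i ≫ a
        rw [← Category.assoc, hg i, Category.assoc, h1, h2]
      constructor
      · intro hZ a
        obtain ⟨b, hb, -⟩ := ex (fun i => (IH i).1 hZ) a
        exact ⟨b, hb⟩
      · intro hZ a
        have orth : ∀ i, Orth (f i) Z := fun i => (IH i).2 hZ
        have ext : ∀ i, Inj (f i) Z := fun i u => (orth i u).exists
        obtain ⟨b, hb, -⟩ := ex ext a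
        refine ⟨b, hb, fun b' hb' => hcB.hom_ext fun ⟨i⟩ => ?_⟩
        show cB.inj i ≫ b' = cB.inj i ≫ b
        have key : ∀ (u : cB.pt ⟶ Z), g ≫ u = a → f i ≫ (cB.inj i ≫ u) = cA.inj i ≫ a := by
          intro u hu
          rw [← Category.assoc, ← hg i, Category.assoc, hu]
        obtain ⟨v, hv, hvu⟩ := orth i (cA.inj i ≫ a)
        rw [hvu _ (key b' hb'), hvu _ (key b hb)]
  | push f g g' f' sq hf IH =>
      constructor
      · intro hZ a
        obtain ⟨b, hb⟩ := IH.1 hZ (g ≫ a)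
        exact ⟨sq.desc b a hb, sq.inr_desc b a hb⟩
      · intro hZ a
        have orth := IH.2 hZ
        obtain ⟨b, hb⟩ := (orth (g ≫ a)).exists
        refine ⟨sq.desc b a hb, sq.inr_desc b a hb, fun b' hb' => ?_⟩
        refine sq.hom_ext ?_ ?_
        · have k1 : f ≫ g' ≫ b' = g ≫ a := by rw [← Category.assoc, sq.w, Category.assoc, hb']
          have k2 : f ≫ g' ≫ sq.desc b a hb = g ≫ a := by
            rw [← Category.assoc, sq.w, Category.assoc, sq.inr_desc]
          obtain ⟨v, hv, hvu⟩ := orth (g ≫ a)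
          rw [hvu _ k1, hvu _ k2]
        · rw [hb', sq.inr_desc]
  | seq F h c hc IH =>
      have step : ∀ n, Inj (F.map (homOfLE (Nat.le_succ n))) Z → ∀ u : F.obj n ⟶ Z,
          ∃ v, F.map (homOfLE (Nat.le_succ n)) ≫ v = u := fun n hn u => hn u
      have ex : MInj M Z → ∀ a : F.obj 0 ⟶ Z, ∃ b : c.pt ⟶ Z, c.ι.app 0 ≫ b = a := by
        intro hZ a
        have inj : ∀ n, Inj (F.map (homOfLE (Nat.le_succ n))) Z := fun n => (IH n).1 hZ
        let t : ∀ n, F.obj n ⟶ Z := fun n => Nat.rec a (fun k u => ((inj k) u).choose) n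
        have ht : ∀ n, F.map (homOfLE (Nat.le_succ n)) ≫ t (n + 1) = t n :=
          fun n => ((inj n) (t n)).choose_spec
        have compat : ∀ n m (hnm : n ≤ m), F.map (homOfLE hnm) ≫ t m = t n := by
          intro n m hnm
          induction hnm with
          | refl => simp
          | @step m hnm ih =>
              have : (homOfLE (Nat.le_succ_of_le hnm) : n ⟶ m + 1)
                  = homOfLE hnm ≫ homOfLE (Nat.le_succ m) := rfl
              rw [this, F.map_comp, Category.assoc, ht, ih]
        refine ⟨hc.desc ⟨Z, fun n => t n, ?_⟩, ?_⟩
        · intro n m φ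
          have : φ = homOfLE (leOfHom φ) := rfl
          rw [this]
          simpa using compat n m (leOfHom φ)
        · exact hc.fac _ 0
      constructor
      · exact ex
      · intro hZ a
        have hZinj : MInj M Z := fun _ _ u hu v => ((hZ u hu) v).exists
        obtain ⟨b, hb⟩ := ex hZinj a
        refine ⟨b, hb, fun b' hb' => ?_⟩
        have orth : ∀ n, Orth (F.map (homOfLE (Nat.le_succ n))) Z := fun n => (IH n).2 hZ
        have all : ∀ n, c.ι.app n ≫ b' = c.ι.app n ≫ b := by
          intro n
          induction n with
          | zero => rw [hb, hb']
          | succ n ih =>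
              have w : F.map (homOfLE (Nat.le_succ n)) ≫ c.ι.app (n + 1) = c.ι.app n :=
                c.w (homOfLE (Nat.le_succ n))
              have k1 : F.map (homOfLE (Nat.le_succ n)) ≫ c.ι.app (n + 1) ≫ b'
                  = c.ι.app n ≫ b := by rw [← Category.assoc, w, ih]
              have k2 : F.map (homOfLE (Nat.le_succ n)) ≫ c.ι.app (n + 1) ≫ b
                  = c.ι.app n ≫ b := by rw [← Category.assoc, w]
              obtain ⟨v, hv, hvu⟩ := orth n (c.ι.app n ≫ b)
              rw [hvu _ k1, hvu _ k2]
        exact hc.hom_ext all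

/-- Maps from the domain of a relative `M`-cell complex into an `M`-injective object
factor through the cell complex; if `M` is strong the factorization is unique. -/
theorem stmt_6 {X Y Z : C} (M : MorphismProperty C) (f : X ⟶ Y) (hf : Cell M f)
    (g : X ⟶ Z) (hZ : MInj M Z) :
    (∃ h : Y ⟶ Z, f ≫ h = g) ∧ (Strong M → ∃! h : Y ⟶ Z, f ≫ h = g) := by
  have key := cell_key hf Z
  refine ⟨key.1 hZ g, fun hs => key.2 ((hs Z).mp hZ) g⟩
end

section
/- If f : X → Y is a relative M-cell complex and Y is injective to all morphisms in M, then f is a weak reflection of X into the injectivity class M^⋔; if M is strong, f is a reflection. -/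
open CategoryTheory Limits

universe v u

variable {C : Type u} [Category.{v} C]

/-- `η : X ⟶ X'` is a weak reflection of `X` into the full subcategory of objects
satisfying `P` if `X'` satisfies `P` and every map from `X` to an object satisfying `P`
factors through `η`. -/
def IsWeakReflection (P : C → Prop) {X X' : C} (η : X ⟶ X') : Prop :=
  P X' ∧ ∀ ⦃Y : C⦄, P Y → ∀ g : X ⟶ Y, ∃ h : X' ⟶ Y, η ≫ h = g

/-- `η : X ⟶ X'` is a reflection if moreover the factorizations are unique. -/
def IsReflection (P : C → Prop) {X X' : C} (η : X ⟶ X') : Prop :=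
  P X' ∧ ∀ ⦃Y : C⦄, P Y → ∀ g : X ⟶ Y, ∃! h : X' ⟶ Y, η ≫ h = g

section Aux

variable {M : MorphismProperty C}

private lemma cell_inj {X Y : C} {f : X ⟶ Y} (hf : Cell M f) {Z : C} (hZ : MInj M Z) :
    Inj f Z := by
  induction hf with
  | base f hf => exact hZ f hf
  | coprod A B f h cA hcA cB hcB g hg ih =>
    intro a
    choose b hb using fun i => ih i (cA.inj i ≫ a)
    refine ⟨hcB.desc (Cofan.mk Z b), hcA.hom_ext fun ⟨i⟩ => ?_⟩
    have fac : cB.inj i ≫ hcB.desc (Cofan.mk Z b) = b i := hcB.fac (Cofan.mk Z b) ⟨i⟩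
    simp only [Cofan.inj] at hg fac hb ⊢
    rw [← Category.assoc, hg i, Category.assoc, fac, hb i]
  | push f g g' f' sq hf ih =>
    intro a
    obtain ⟨b, hb⟩ := ih (g ≫ a)
    exact ⟨sq.desc b a hb, sq.inr_desc b a hb⟩
  | seq F h c hc ih =>
    intro a
    let b : ∀ n, F.obj n ⟶ Z := fun n => Nat.rec a (fun n x => (ih n x).choose) n
    have hb : ∀ n, F.map (homOfLE (Nat.le_succ n)) ≫ b (n + 1) = b n :=
      fun n => (ih n (b n)).choose_spec
    have key : ∀ m n (hmn : m ≤ n), F.map (homOfLE hmn) ≫ b n = b m := by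
      intro m n hmn
      induction hmn with
      | refl =>
        have : homOfLE (le_refl m) = 𝟙 m := rfl
        rw [this, F.map_id, Category.id_comp]
      | @step k hk ihk =>
        have : homOfLE (Nat.le_succ_of_le hk) =
            homOfLE hk ≫ homOfLE (Nat.le_succ k) := rfl
        rw [this, F.map_comp, Category.assoc, hb, ihk]
    let cc : Cocone F := ⟨Z, ⟨b, by
      intro i j φ
      have : φ = homOfLE (leOfHom φ) := rfl
      simp only [Functor.const_obj_map, Category.comp_id]
      rw [this]
      exact (key i j (leOfHom φ)).trans (Category.comp_id (b i)).symm⟩⟩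
    exact ⟨hc.desc cc, hc.fac cc 0⟩

private lemma cell_orth {X Y : C} {f : X ⟶ Y} (hf : Cell M f) {Z : C} (hZ : MOrth M Z) :
    Orth f Z := by
  induction hf with
  | base f hf => exact hZ f hf
  | coprod A B f h cA hcA cB hcB g hg ih =>
    intro a
    choose b hb hbu using fun i => ih i (cA.inj i ≫ a)
    refine ⟨hcB.desc (Cofan.mk Z b), hcA.hom_ext fun ⟨i⟩ => ?_, fun d hd => ?_⟩
    · have fac : cB.inj i ≫ hcB.desc (Cofan.mk Z b) = b i := hcB.fac (Cofan.mk Z b) ⟨i⟩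
      simp only [Cofan.inj] at hg fac hb ⊢
      rw [← Category.assoc, hg i, Category.assoc, fac, hb i]
    · refine hcB.hom_ext fun ⟨i⟩ => ?_
      have fac : cB.inj i ≫ hcB.desc (Cofan.mk Z b) = b i := hcB.fac (Cofan.mk Z b) ⟨i⟩
      have : f i ≫ cB.inj i ≫ d = cA.inj i ≫ a := by
        rw [← Category.assoc, ← hg i, Category.assoc, hd]
      have := hbu i (cB.inj i ≫ d) this
      simp only [Cofan.inj] at this fac
      rw [this, fac]
  | push f g g' f' sq hf ih =>
    intro a
    obtain ⟨b, hb, hbu⟩ := ih (g ≫ a)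
    refine ⟨sq.desc b a hb, sq.inr_desc b a hb, fun d hd => ?_⟩
    have hd' : f' ≫ d = a := hd
    have : g' ≫ d = b := hbu (g' ≫ d)
      (show f ≫ g' ≫ d = g ≫ a by rw [← Category.assoc, sq.w, Category.assoc, hd'])
    refine sq.hom_ext ?_ ?_
    · rw [this, sq.inl_desc]
    · rw [hd', sq.inr_desc]
  | seq F h c hc ih =>
    intro a
    let b : ∀ n, F.obj n ⟶ Z := fun n => Nat.rec a (fun n x => (ih n x).choose) n
    have hb : ∀ n, F.map (homOfLE (Nat.le_succ n)) ≫ b (n + 1) = b n :=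
      fun n => (ih n (b n)).choose_spec.1
    have key : ∀ m n (hmn : m ≤ n), F.map (homOfLE hmn) ≫ b n = b m := by
      intro m n hmn
      induction hmn with
      | refl =>
        have : homOfLE (le_refl m) = 𝟙 m := rfl
        rw [this, F.map_id, Category.id_comp]
      | @step k hk ihk =>
        have : homOfLE (Nat.le_succ_of_le hk) =
            homOfLE hk ≫ homOfLE (Nat.le_succ k) := rfl
        rw [this, F.map_comp, Category.assoc, hb, ihk]
    let cc : Cocone F := ⟨Z, ⟨b, by
      intro i j φ
      have : φ = homOfLE (leOfHom φ) := rfl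
      simp only [Functor.const_obj_map, Category.comp_id]
      rw [this]
      exact (key i j (leOfHom φ)).trans (Category.comp_id (b i)).symm⟩⟩
    refine ⟨hc.desc cc, hc.fac cc 0, fun d hd => ?_⟩
    refine hc.hom_ext fun n => ?_
    induction n with
    | zero => rw [hc.fac cc 0]; exact hd
    | succ k ihn =>
      have fk : F.map (homOfLE (Nat.le_succ k)) ≫ c.ι.app (k + 1) = c.ι.app k :=
        c.w (homOfLE (Nat.le_succ k))
      have fck : c.ι.app k ≫ hc.desc cc = b k := hc.fac cc k
      have fcks : c.ι.app (k + 1) ≫ hc.desc cc = b (k + 1) := hc.fac cc (k + 1)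
      have h1 : F.map (homOfLE (Nat.le_succ k)) ≫ c.ι.app (k + 1) ≫ d = b k := by
        rw [← Category.assoc, fk, ihn, fck]
      have h2 := (ih k (b k)).choose_spec.2 (c.ι.app (k + 1) ≫ d) h1
      rw [fcks, h2]

end Aux

/-- A relative `M`-cell complex with `M`-injective codomain is a weak reflection into
the injectivity class `M^⋔`; if `M` is strong, it is a reflection. -/
theorem stmt_7 {X Y : C} (M : MorphismProperty C) (f : X ⟶ Y) (hf : Cell M f)
    (hY : MInj M Y) :
    IsWeakReflection (MInj M) f ∧ (Strong M → IsReflection (MInj M) f) := by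
  refine ⟨⟨hY, fun Z hZ g => cell_inj hf hZ g⟩, fun hS => ⟨hY, fun Z hZ g => ?_⟩⟩
  exact cell_orth hf ((hS Z).mp hZ) g
end

section
/- Let M be a strong set of morphisms, f : A → B a morphism, and let f̄ : Ā → B̄ be the reflection of f into the orthogonality class M^⊥ (i.e., the induced map between the reflections of A and B). Then (M ∪ {f})^⊥ = (M ∪ {f̄})^⊥ and (M ∪ {f})^⋔ = (M ∪ {f̄})^⋔. -/
open CategoryTheory Limits

universe v u

variable {C : Type u} [Category.{v} C]

private lemma inj_iff_aux (M : MorphismProperty C)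
    {A B Abar Bbar : C} (f : A ⟶ B) (ηA : A ⟶ Abar) (ηB : B ⟶ Bbar)
    (hA : IsReflection (MOrth M) ηA) (hB : IsReflection (MOrth M) ηB)
    (fbar : Abar ⟶ Bbar) (hsq : ηA ≫ fbar = f ≫ ηB)
    {X : C} (hX : MOrth M X) : Inj f X ↔ Inj fbar X := by
  have cancelA : ∀ (u v : Abar ⟶ X), ηA ≫ u = ηA ≫ v → u = v := by
    intro u v huv
    obtain ⟨w, -, hw⟩ := hA.2 hX (ηA ≫ u)
    exact (hw u rfl).trans (hw v huv.symm).symm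
  constructor
  · intro h abar
    obtain ⟨b, hb⟩ := h (ηA ≫ abar)
    obtain ⟨bbar, hbbar, -⟩ := hB.2 hX b
    refine ⟨bbar, cancelA _ _ ?_⟩
    rw [← Category.assoc, hsq, Category.assoc, hbbar, hb]
  · intro h a
    obtain ⟨abar, habar, -⟩ := hA.2 hX a
    obtain ⟨bbar, hbbar⟩ := h abar
    refine ⟨ηB ≫ bbar, ?_⟩
    rw [← Category.assoc, ← hsq, Category.assoc, hbbar, habar]

private lemma orth_iff_aux (M : MorphismProperty C)
    {A B Abar Bbar : C} (f : A ⟶ B) (ηA : A ⟶ Abar) (ηB : B ⟶ Bbar)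
    (hA : IsReflection (MOrth M) ηA) (hB : IsReflection (MOrth M) ηB)
    (fbar : Abar ⟶ Bbar) (hsq : ηA ≫ fbar = f ≫ ηB)
    {X : C} (hX : MOrth M X) : Orth f X ↔ Orth fbar X := by
  have cancelA : ∀ (u v : Abar ⟶ X), ηA ≫ u = ηA ≫ v → u = v := by
    intro u v huv
    obtain ⟨w, -, hw⟩ := hA.2 hX (ηA ≫ u)
    exact (hw u rfl).trans (hw v huv.symm).symm
  constructor
  · intro h abar
    obtain ⟨b, hb, hbu⟩ := h (ηA ≫ abar)
    obtain ⟨bbar, hbbar, hbbaru⟩ := hB.2 hX b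
    refine ⟨bbar, cancelA _ _ ?_, ?_⟩
    · rw [← Category.assoc, hsq, Category.assoc, hbbar, hb]
    · intro y hy
      refine hbbaru y (hbu (ηB ≫ y) ?_)
      show f ≫ (ηB ≫ y) = ηA ≫ abar
      rw [← Category.assoc, ← hsq, Category.assoc, hy]
  · intro h a
    obtain ⟨abar, habar, -⟩ := hA.2 hX a
    obtain ⟨bbar, hbbar, hbbaru⟩ := h abar
    refine ⟨ηB ≫ bbar, ?_, ?_⟩
    · show f ≫ (ηB ≫ bbar) = a
      rw [← Category.assoc, ← hsq, Category.assoc, hbbar, habar]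
    · intro y hy
      obtain ⟨ybar, hybar, -⟩ := hB.2 hX y
      have : fbar ≫ ybar = abar := by
        apply cancelA
        rw [← Category.assoc, hsq, Category.assoc, hybar, hy, habar]
      rw [← hybar, hbbaru ybar this]

/-- For a strong set `M` of morphisms with reflections `η_A : A ⟶ Ā`, `η_B : B ⟶ B̄`
into the orthogonality class `M^⊥`, and `f̄ : Ā ⟶ B̄` the induced map (the reflection of
`f`), adjoining `f` or `f̄` to `M` gives the same orthogonality and injectivity classes. -/
theorem stmt_9 (M : MorphismProperty C) (hM : Strong M)
    {A B Abar Bbar : C} (f : A ⟶ B) (ηA : A ⟶ Abar) (ηB : B ⟶ Bbar)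
    (hA : IsReflection (MOrth M) ηA) (hB : IsReflection (MOrth M) ηB)
    (fbar : Abar ⟶ Bbar) (hsq : ηA ≫ fbar = f ≫ ηB) :
    (∀ X : C, (MOrth M X ∧ Orth f X) ↔ (MOrth M X ∧ Orth fbar X)) ∧
    (∀ X : C, (MInj M X ∧ Inj f X) ↔ (MInj M X ∧ Inj fbar X)) := by
  constructor
  · intro X
    exact and_congr_right fun hX => orth_iff_aux M f ηA ηB hA hB fbar hsq hX
  · intro X
    exact and_congr_right fun hX =>
      inj_iff_aux M f ηA ηB hA hB fbar hsq ((hM X).mp hX)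
end

section
/- For a relational Horn logic formula F and a relational structure X, interpretations of F in X are in bijection with morphisms of relational structures from the classifying structure [F] to X. -/
open CategoryTheory Limits

/-- A relational signature: a set of sorts and a set of relation symbols, each with an
arity, i.e. a finite list of sorts. -/
structure RelSig where
  S : Type
  R : Type
  n : R → ℕ
  sorts : ∀ r : R, Fin (n r) → S

/-- A relational structure: a carrier set for each sort and, for each relation symbol,
a set of tuples of matching sorts. -/
structure RelStr (σ : RelSig) where
  carrier : σ.S → Type
  rel : ∀ r : σ.R, Set (∀ i : Fin (σ.n r), carrier (σ.sorts r i))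

variable {σ : RelSig}

/-- A morphism of relational structures: sort-indexed functions preserving all
relations. -/
@[ext]
structure RelMor (X Y : RelStr σ) where
  app : ∀ s, X.carrier s → Y.carrier s
  map_rel : ∀ r t, t ∈ X.rel r → (fun i => app _ (t i)) ∈ Y.rel r

/-- The category of relational structures over a signature. -/
instance : Category (RelStr σ) where
  Hom := RelMor
  id X := ⟨fun _ x => x, fun _ _ ht => ht⟩
  comp f g := ⟨fun s x => g.app s (f.app s x), fun r t ht => g.map_rel r _ (f.map_rel r t ht)⟩
  id_comp _ := rfl
  comp_id _ := rfl
  assoc _ _ _ := rfl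

/-- An RHL atom: a relation atom `r(v₁,…,vₙ)`, a sort quantification atom `v↓`, or an
equality atom `u ≡ v` between variables of the same sort. Variables of sort `s` are
represented by natural-number names paired with the sort `s`. -/
inductive Atom (σ : RelSig) where
  | rel (r : σ.R) (v : Fin (σ.n r) → ℕ)
  | sortQ (s : σ.S) (u : ℕ)
  | eq (s : σ.S) (u w : ℕ)

/-- An RHL formula: a finite conjunction of atoms. -/
abbrev Formula (σ : RelSig) := List (Atom σ)

/-- The variable `(s, k)` occurs in an atom. -/
def Atom.occurs {σ : RelSig} : Atom σ → σ.S → ℕ → Prop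
  | .rel r v, s, k => ∃ i, σ.sorts r i = s ∧ v i = k
  | .sortQ s' u, s, k => s' = s ∧ u = k
  | .eq s' u w, s, k => s' = s ∧ (u = k ∨ w = k)

/-- The variable `(s, k)` occurs in a formula. -/
def occurs {σ : RelSig} (F : Formula σ) (s : σ.S) (k : ℕ) : Prop :=
  ∃ a ∈ F, a.occurs s k

theorem occurs_rel {σ : RelSig} {F : Formula σ} {r : σ.R} {v : Fin (σ.n r) → ℕ}
    (h : Atom.rel r v ∈ F) (i : Fin (σ.n r)) : occurs F (σ.sorts r i) (v i) :=
  ⟨_, h, i, rfl, rfl⟩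

theorem occurs_eql {σ : RelSig} {F : Formula σ} {s : σ.S} {u w : ℕ}
    (h : Atom.eq s u w ∈ F) : occurs F s u :=
  ⟨_, h, rfl, Or.inl rfl⟩

theorem occurs_eqr {σ : RelSig} {F : Formula σ} {s : σ.S} {u w : ℕ}
    (h : Atom.eq s u w ∈ F) : occurs F s w :=
  ⟨_, h, rfl, Or.inr rfl⟩

/-- An interpretation of a formula `F` in a relational structure `X`: an assignment of
elements of matching sorts to the variables occurring in `F` making all atoms of `F`
hold. (Sort quantification atoms impose no condition beyond occurrence.) -/
structure Interp {σ : RelSig} (F : Formula σ) (X : RelStr σ) where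
  app : ∀ s k, occurs F s k → X.carrier s
  rel_holds : ∀ r v (h : Atom.rel r v ∈ F),
    (fun i => app (σ.sorts r i) (v i) (occurs_rel h i)) ∈ X.rel r
  eq_holds : ∀ s u w (h : Atom.eq s u w ∈ F),
    app s u (occurs_eql h) = app s w (occurs_eqr h)

/-- The variables of sort `s` occurring in `F`. -/
def Vars {σ : RelSig} (F : Formula σ) (s : σ.S) : Type := { k : ℕ // occurs F s k }

/-- Two variables are related if `F` contains an equality atom between them. -/
def eqRel {σ : RelSig} (F : Formula σ) (s : σ.S) : Vars F s → Vars F s → Prop :=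
  fun u w => Atom.eq s u.1 w.1 ∈ F

/-- The classifying relational structure `[F]` of a formula `F`: carriers are the
occurring variables modulo the equalities asserted in `F`, and relations consist of the
tuples asserted in `F`. -/
def classify {σ : RelSig} (F : Formula σ) : RelStr σ where
  carrier s := Quot (eqRel F s)
  rel r := { t | ∃ (v : Fin (σ.n r) → ℕ) (h : Atom.rel r v ∈ F),
      ∀ i, t i = Quot.mk _ ⟨v i, occurs_rel h i⟩ }

/-! Every interpretation of `F` is the pushforward of the generic interpretation `I_F` in `[F]`
along exactly one morphism: `[F]` is generated by the variables of `F` subject only to the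
equalities and tuples that `F` asserts. -/

namespace Interp

variable {F : Formula σ} {X Y : RelStr σ}

def map (I : Interp F X) (f : X ⟶ Y) : Interp F Y where
  app s k hk := f.app s (I.app s k hk)
  rel_holds r v h := f.map_rel r _ (I.rel_holds r v h)
  eq_holds s u w h := congrArg (f.app s) (I.eq_holds s u w h)

variable (F) in
def generic : Interp F (classify F) where
  app _ k h := Quot.mk _ ⟨k, h⟩
  rel_holds _ v h := ⟨v, h, fun _ => rfl⟩
  eq_holds _ _ _ h := Quot.sound h

def lift (I : Interp F X) : classify F ⟶ X where
  app s := Quot.lift (fun k : Vars F s => I.app s k.1 k.2) fun u w h => I.eq_holds s u.1 w.1 h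
  map_rel := by
    rintro r t ⟨v, hv, ht⟩
    obtain rfl : t = fun i => Quot.mk _ ⟨v i, occurs_rel hv i⟩ := funext ht
    exact I.rel_holds r v hv

theorem generic_map_lift (I : Interp F X) : (generic F).map I.lift = I := rfl

theorem lift_generic_map (f : classify F ⟶ X) : ((generic F).map f).lift = f := by
  apply RelMor.ext
  funext s x
  induction x using Quot.ind
  rfl

def equivHom : Interp F X ≃ (classify F ⟶ X) where
  toFun := lift
  invFun := (generic F).map
  left_inv := generic_map_lift
  right_inv := lift_generic_map

end Interp

/-- Interpretations of an RHL formula `F` in a relational structure `X` are in bijection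
with morphisms `[F] ⟶ X` from the classifying structure of `F`. -/
theorem stmt_13 (F : Formula σ) (X : RelStr σ) :
    Nonempty (Interp F X ≃ (classify F ⟶ X)) :=
  ⟨Interp.equivHom⟩
end

section
/- Let M be a finite set of epimorphisms between finite relational structures, and let X₀ → X₁ → X₂ → … be a sequence of relative M-cell complexes produced by the small object argument starting from a finite relational structure X₀. Then the sequence is eventually stationary: x_n is an isomorphism for all sufficiently large n. -/
open CategoryTheory Limits

universe v u

variable {C : Type u} [Category.{v} C]

variable {σ : RelSig}

/-- The morphism property generated by an indexed family of morphisms. -/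
inductive OfHoms {ι : Type} (A B : ι → RelStr σ) (e : ∀ i, A i ⟶ B i) :
    ∀ {X Y : RelStr σ}, (X ⟶ Y) → Prop
  | mk (i : ι) : OfHoms A B e (e i)

/-- A relational structure is finite if all carriers and all relations are finite and
almost always empty. -/
def FiniteStr (X : RelStr σ) : Prop :=
  Finite (Σ s : σ.S, X.carrier s) ∧ Finite (Σ r : σ.R, (X.rel r : Set _))

section AuxStab

lemma stab_anti (a : ℕ → ℕ) (h : ∀ n, a (n + 1) ≤ a n) :
    ∃ N, ∀ n, N ≤ n → a n = a N := by
  have ha : Antitone a := antitone_nat_of_succ_le h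
  obtain ⟨N, hN⟩ := Nat.sInf_mem (Set.range_nonempty a)
  exact ⟨N, fun n hn => le_antisymm (ha hn) (hN ▸ Nat.sInf_le ⟨n, rfl⟩)⟩

lemma stab_mono (a : ℕ → ℕ) (K : ℕ) (h : ∀ n, a n ≤ a (n + 1)) (hb : ∀ n, a n ≤ K) :
    ∃ N, ∀ n, N ≤ n → a n = a N := by
  obtain ⟨N, hN⟩ := stab_anti (fun n => K - a n) (fun n => Nat.sub_le_sub_left (h n) K)
  refine ⟨N, fun n hn => ?_⟩
  have h1 := hN n hn
  have h2 := hb n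
  have h3 := hb N
  omega

end AuxStab

section AuxCat

lemma cell_epi {M : MorphismProperty C}
    (hM : ∀ {P Q : C} (g : P ⟶ Q), M g → Epi g)
    {X Y : C} (f : X ⟶ Y) (hf : Cell M f) : Epi f := by
  induction hf with
  | base g hg => exact hM g hg
  | coprod A' B' f' h cA hcA cB hcB g hg ih =>
      constructor
      intro Z u v huv
      refine hcB.hom_ext fun ⟨i⟩ => ?_
      have h1 : f' i ≫ (cB.inj i ≫ u) = f' i ≫ (cB.inj i ≫ v) := by
        have e1 : cA.inj i ≫ g ≫ u = f' i ≫ cB.inj i ≫ u := by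
          rw [← Category.assoc, hg i, Category.assoc]
        have e2 : cA.inj i ≫ g ≫ v = f' i ≫ cB.inj i ≫ v := by
          rw [← Category.assoc, hg i, Category.assoc]
        rw [← e1, ← e2, huv]
      haveI := ih i
      exact (cancel_epi (f' i)).mp h1
  | push f g g' f' sq hf ih =>
      constructor
      intro Z u v huv
      have h1 : g' ≫ u = g' ≫ v := by
        haveI := ih
        refine (cancel_epi f).mp ?_
        rw [← Category.assoc, sq.w, Category.assoc, huv, ← Category.assoc, ← sq.w,
          Category.assoc]
      exact PushoutCocone.IsColimit.hom_ext sq.isColimit h1 huv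
  | seq G h c hc ih =>
      constructor
      intro Z u v huv
      refine hc.hom_ext fun n => ?_
      induction n with
      | zero => exact huv
      | succ k ihk =>
          haveI := ih k
          refine (cancel_epi (G.map (homOfLE (Nat.le_succ k)))).mp ?_
          rw [← Category.assoc, ← Category.assoc]
          rw [c.w (homOfLE (Nat.le_succ k))]
          exact ihk

end AuxCat

section AuxRel

lemma epi_surj {X Y : RelStr σ} (f : X ⟶ Y) (hf : Epi f) (s : σ.S) :
    Function.Surjective (f.app s) := by
  let Z : RelStr σ := ⟨fun _ => Prop, fun _ => Set.univ⟩
  let g : Y ⟶ Z := ⟨fun s y => y ∈ Set.range (f.app s), fun _ _ _ => trivial⟩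
  let h : Y ⟶ Z := ⟨fun _ _ => True, fun _ _ _ => trivial⟩
  have hfg : f ≫ g = f ≫ h := by
    apply RelMor.ext
    funext s x
    exact eq_true ⟨x, rfl⟩
  have hg : g = h := (cancel_epi f).mp hfg
  intro y
  have hy : (y ∈ Set.range (f.app s)) = True :=
    congrFun (congrFun (congrArg RelMor.app hg) s) y
  exact of_eq_true hy

lemma colimit_rel {J : Type*} [Category J] (D : J ⥤ RelStr σ) (c : Cocone D)
    (hc : IsColimit c) {r : σ.R} {t : ∀ i, c.pt.carrier (σ.sorts r i)}
    (ht : t ∈ c.pt.rel r) :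
    ∃ (j : J) (t' : ∀ i, (D.obj j).carrier (σ.sorts r i)),
      t' ∈ (D.obj j).rel r ∧ (fun i => (c.ι.app j).app _ (t' i)) = t := by
  let Z : RelStr σ :=
    { carrier := c.pt.carrier
      rel := fun r => {t | ∃ (j : J) (t' : ∀ i, (D.obj j).carrier (σ.sorts r i)),
        t' ∈ (D.obj j).rel r ∧ (fun i => (c.ι.app j).app _ (t' i)) = t} }
  let jm : Z ⟶ c.pt := ⟨fun _ x => x, fun r t ht => by
    obtain ⟨j, t', ht', rfl⟩ := ht
    exact (c.ι.app j).map_rel r t' ht'⟩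
  let c' : Cocone D :=
    { pt := Z
      ι :=
        { app := fun j => ⟨(c.ι.app j).app, fun r t' ht' => ⟨j, t', ht', rfl⟩⟩
          naturality := fun j j' φ => by
            have h := congrArg RelMor.app (c.ι.naturality φ)
            refine RelMor.ext ?_
            funext s x
            exact congrFun (congrFun h s) x } }
  have hdj : hc.desc c' ≫ jm = 𝟙 c.pt := by
    refine hc.hom_ext fun j => ?_
    have h1 : c.ι.app j ≫ hc.desc c' ≫ jm = c'.ι.app j ≫ jm := by
      rw [← Category.assoc, hc.fac c' j]
    rw [h1]
    exact RelMor.ext rfl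
  have hfix : ∀ s x, (hc.desc c').app s x = x := fun s x =>
    congrFun (congrFun (congrArg RelMor.app hdj) s) x
  have hm := (hc.desc c').map_rel r t ht
  have he : (fun i => (hc.desc c').app _ (t i)) = t := funext fun i => hfix _ _
  rw [he] at hm
  exact hm

lemma cell_supp {ι : Type} (A B : ι → RelStr σ) (e : ∀ i, A i ⟶ B i)
    {X Y : RelStr σ} (f : X ⟶ Y) (hf : Cell (fun _ _ f => OfHoms A B e f) f) :
    ∀ r : σ.R, (Y.rel r).Nonempty →
      (X.rel r).Nonempty ∨ ∃ i, ((B i).rel r).Nonempty := by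
  induction hf with
  | base g hg =>
      cases hg with
      | mk i => exact fun r hne => Or.inr ⟨i, hne⟩
  | coprod A' B' f' h cA hcA cB hcB g hg ih =>
      rintro r ⟨t, ht⟩
      obtain ⟨⟨j⟩, t', ht', -⟩ := colimit_rel _ cB hcB ht
      rcases ih j r ⟨t', ht'⟩ with ⟨u, hu⟩ | hi
      · exact Or.inl ⟨_, (cA.inj j).map_rel r u hu⟩
      · exact Or.inr hi
  | push f g g' f' sq hf ih =>
      rintro r ⟨t, ht⟩
      obtain ⟨j, t', ht', -⟩ := colimit_rel _ _ sq.isColimit ht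
      match j with
      | none => exact Or.inl ⟨_, g.map_rel r t' ht'⟩
      | some WalkingPair.left =>
          rcases ih r ⟨t', ht'⟩ with ⟨u, hu⟩ | hi
          · exact Or.inl ⟨_, g.map_rel r u hu⟩
          · exact Or.inr hi
      | some WalkingPair.right => exact Or.inl ⟨t', ht'⟩
  | seq G h c hc ih =>
      rintro r ⟨t, ht⟩
      obtain ⟨n, t', ht', -⟩ := colimit_rel _ c hc ht
      clear ht t
      induction n with
      | zero => exact Or.inl ⟨t', ht'⟩
      | succ k ihk =>
          rcases ih k r ⟨t', ht'⟩ with ⟨u, hu⟩ | hi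
          · exact ihk u hu
          · exact Or.inr hi

end AuxRel

/-- Given a finite set `M = {e i}` of epimorphisms between finite relational structures
and a sequence `X₀ ⟶ X₁ ⟶ …` as produced by the small object argument for `M` starting
from a finite structure `X₀` (each transition map is a relative `M`-cell complex, and
every map from a domain of `M` into some stage extends into a later stage compatibly),
the sequence is eventually stationary: the transition maps are isomorphisms for all
sufficiently large `n`. -/
theorem stmt_16 {ι : Type} [Finite ι] (A B : ι → RelStr σ) (e : ∀ i, A i ⟶ B i)
    (hepi : ∀ i, Epi (e i)) (hA : ∀ i, FiniteStr (A i)) (hB : ∀ i, FiniteStr (B i))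
    (F : ℕ ⥤ RelStr σ) (h0 : FiniteStr (F.obj 0))
    (hcell : ∀ n : ℕ, Cell (fun _ _ f => OfHoms A B e f) (F.map (homOfLE (Nat.le_succ n))))
    (hfact : ∀ (i : ι) (n : ℕ) (a : A i ⟶ F.obj n),
      ∃ (m : ℕ) (hnm : n ≤ m) (b : B i ⟶ F.obj m),
        e i ≫ b = a ≫ F.map (homOfLE hnm)) :
    ∃ N : ℕ, ∀ n, N ≤ n → IsIso (F.map (homOfLE (Nat.le_succ n))) := by
  classical
  have hM : ∀ {P Q : RelStr σ} (g : P ⟶ Q), OfHoms A B e g → Epi g := by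
    intro P Q g hg
    cases hg with | mk i => exact hepi i
  have hestep : ∀ n, Epi (F.map (homOfLE (Nat.le_succ n))) := fun n =>
    cell_epi hM _ (hcell n)
  have hsstep : ∀ n s, Function.Surjective ((F.map (homOfLE (Nat.le_succ n))).app s) :=
    fun n s => epi_surj _ (hestep n) s
  have hsurj0 : ∀ n s, Function.Surjective ((F.map (homOfLE (Nat.zero_le n))).app s) := by
    intro n
    induction n with
    | zero =>
        intro s
        have h1 : F.map (homOfLE (Nat.zero_le 0)) = 𝟙 (F.obj 0) := by
          rw [show homOfLE (Nat.zero_le 0) = 𝟙 (0 : ℕ) from Subsingleton.elim _ _, F.map_id]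
        rw [h1]
        exact fun y => ⟨y, rfl⟩
    | succ k ih =>
        intro s
        have h1 : F.map (homOfLE (Nat.zero_le (k + 1))) =
            F.map (homOfLE (Nat.zero_le k)) ≫ F.map (homOfLE (Nat.le_succ k)) := by
          rw [← F.map_comp]
          exact congrArg F.map (Subsingleton.elim _ _)
        rw [h1]
        exact (hsstep k s).comp (ih s)
  haveI hC0 : Finite (Σ s, (F.obj 0).carrier s) := h0.1
  have hCfin : ∀ n, Finite (Σ s, (F.obj n).carrier s) := by
    intro n
    refine Finite.of_surjective
      (fun p : Σ s, (F.obj 0).carrier s =>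
        (⟨p.1, (F.map (homOfLE (Nat.zero_le n))).app p.1 p.2⟩ :
          Σ s, (F.obj n).carrier s)) ?_
    rintro ⟨s, y⟩
    obtain ⟨x, hx⟩ := hsurj0 n s y
    exact ⟨⟨s, x⟩, by simp [hx]⟩
  have hcarfin : ∀ n s, Finite ((F.obj n).carrier s) := by
    intro n s
    haveI := hCfin n
    exact Finite.of_injective (fun x => (⟨s, x⟩ : Σ s, (F.obj n).carrier s)) sigma_mk_injective
  -- support set
  let S : Set σ.R := {r | ((F.obj 0).rel r).Nonempty ∨ ∃ i, ((B i).rel r).Nonempty}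
  have hsuppfin : ∀ (X : RelStr σ), Finite (Σ r, (X.rel r : Set _)) →
      {r | (X.rel r).Nonempty}.Finite := by
    intro X hX
    haveI := hX
    refine Set.Finite.subset (Set.finite_range (fun p : Σ r, (X.rel r : Set _) => p.1)) ?_
    rintro r ⟨t, ht⟩
    exact ⟨⟨r, t, ht⟩, rfl⟩
  have hSfin : S.Finite := by
    have h1 := hsuppfin _ h0.2
    have h2 : (⋃ i, {r | ((B i).rel r).Nonempty}).Finite :=
      Set.finite_iUnion fun i => hsuppfin _ (hB i).2
    refine Set.Finite.subset (h1.union h2) ?_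
    rintro r (hr | ⟨i, hi⟩)
    · exact Or.inl hr
    · exact Or.inr (Set.mem_iUnion.mpr ⟨i, hi⟩)
  haveI hSfin' : Finite S := hSfin.to_subtype
  have hsupp : ∀ n r, ((F.obj n).rel r).Nonempty → r ∈ S := by
    intro n
    induction n with
    | zero => exact fun r h => Or.inl h
    | succ k ih =>
        intro r h
        rcases cell_supp A B e _ (hcell k) r h with h' | h'
        · exact ih r h'
        · exact Or.inr h'
  have hRfin : ∀ n, Finite (Σ r, ((F.obj n).rel r : Set _)) := by
    intro n
    haveI := fun s => hcarfin n s
    refine Finite.of_injective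
      (fun p : Σ r, ((F.obj n).rel r : Set _) =>
        (⟨⟨p.1, hsupp n p.1 ⟨p.2.1, p.2.2⟩⟩, p.2.1⟩ :
          Σ r : S, ∀ i, (F.obj n).carrier (σ.sorts r.1 i))) ?_
    rintro ⟨r1, t1, ht1⟩ ⟨r2, t2, ht2⟩ hh
    dsimp only at hh
    obtain ⟨h1, h2⟩ := Sigma.ext_iff.mp hh
    obtain rfl : r1 = r2 := congrArg Subtype.val h1
    obtain rfl : t1 = t2 := eq_of_heq h2
    rfl
  -- carrier cardinalities stabilize
  let a : ℕ → ℕ := fun n => Nat.card (Σ s, (F.obj n).carrier s)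
  have hamono : ∀ n, a (n + 1) ≤ a n := by
    intro n
    haveI := hCfin n
    refine Nat.card_le_card_of_surjective
      (fun p : Σ s, (F.obj n).carrier s =>
        (⟨p.1, (F.map (homOfLE (Nat.le_succ n))).app p.1 p.2⟩ :
          Σ s, (F.obj (n + 1)).carrier s)) ?_
    rintro ⟨s, y⟩
    obtain ⟨x, hx⟩ := hsstep n s y
    exact ⟨⟨s, x⟩, by simp [hx]⟩
  obtain ⟨N₁, hN₁⟩ := stab_anti a hamono
  have hbij : ∀ n, N₁ ≤ n → ∀ s,
      Function.Bijective ((F.map (homOfLE (Nat.le_succ n))).app s) := by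
    intro n hn s
    haveI := hCfin n
    haveI := hCfin (n + 1)
    have hcard : a n = a (n + 1) := by
      rw [hN₁ n hn, hN₁ (n + 1) (hn.trans (Nat.le_succ n))]
    have hΨ : Function.Bijective (fun p : Σ s, (F.obj n).carrier s =>
        (⟨p.1, (F.map (homOfLE (Nat.le_succ n))).app p.1 p.2⟩ :
          Σ s, (F.obj (n + 1)).carrier s)) := by
      rw [Nat.bijective_iff_surjective_and_card]
      constructor
      · rintro ⟨s', y⟩
        obtain ⟨x, hx⟩ := hsstep n s' y
        exact ⟨⟨s', x⟩, by simp [hx]⟩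
      · exact hcard
    constructor
    · intro x y hxy
      have h1 : (⟨s, x⟩ : Σ s, (F.obj n).carrier s) = ⟨s, y⟩ := by
        apply hΨ.injective
        show (⟨s, (F.map (homOfLE (Nat.le_succ n))).app s x⟩ :
          Σ s, (F.obj (n + 1)).carrier s) = ⟨s, (F.map (homOfLE (Nat.le_succ n))).app s y⟩
        rw [hxy]
      exact sigma_mk_injective h1
    · exact hsstep n s
  -- relation cardinalities stabilize
  let b : ℕ → ℕ := fun n => Nat.card (Σ r, ((F.obj n).rel r : Set _))
  let K := Nat.card (Σ r : S, ∀ i, (F.obj 0).carrier (σ.sorts r.1 i))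
  have hbound : ∀ n, b n ≤ K := by
    intro n
    haveI := fun s => hcarfin 0 s
    refine Nat.card_le_card_of_injective
      (fun p : Σ r, ((F.obj n).rel r : Set _) =>
        (⟨⟨p.1, hsupp n p.1 ⟨p.2.1, p.2.2⟩⟩,
          fun i => Function.surjInv (hsurj0 n _) (p.2.1 i)⟩ :
          Σ r : S, ∀ i, (F.obj 0).carrier (σ.sorts r.1 i))) ?_
    rintro ⟨r1, t1, ht1⟩ ⟨r2, t2, ht2⟩ hh
    dsimp only at hh
    obtain ⟨h1, h2⟩ := Sigma.ext_iff.mp hh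
    obtain rfl : r1 = r2 := congrArg Subtype.val h1
    have h2' := eq_of_heq h2
    have h3 : t1 = t2 := funext fun i =>
      Function.injective_surjInv (hsurj0 n _) (congrFun h2' i)
    cases h3
    rfl
  have hbmono : ∀ n, N₁ ≤ n → b n ≤ b (n + 1) := by
    intro n hn
    haveI := hRfin (n + 1)
    refine Nat.card_le_card_of_injective
      (fun p : Σ r, ((F.obj n).rel r : Set _) =>
        (⟨p.1, ⟨fun i => (F.map (homOfLE (Nat.le_succ n))).app _ (p.2.1 i),
          (F.map (homOfLE (Nat.le_succ n))).map_rel p.1 p.2.1 p.2.2⟩⟩ :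
          Σ r, ((F.obj (n + 1)).rel r : Set _))) ?_
    rintro ⟨r1, t1, ht1⟩ ⟨r2, t2, ht2⟩ hh
    dsimp only at hh
    obtain ⟨h1, h2⟩ := Sigma.ext_iff.mp hh
    obtain rfl : r1 = r2 := h1
    have h2' := congrArg Subtype.val (eq_of_heq h2)
    have h3 : t1 = t2 := funext fun i => (hbij n hn _).injective (congrFun h2' i)
    cases h3
    rfl
  obtain ⟨N₂, hN₂⟩ := stab_mono (fun m => b (N₁ + m)) K
    (fun m => hbmono (N₁ + m) (Nat.le_add_right _ _))
    (fun m => hbound _)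
  refine ⟨N₁ + N₂, fun n hn => ?_⟩
  have hn1 : N₁ ≤ n := le_trans (Nat.le_add_right _ _) hn
  have hb1 : b n = b (n + 1) := by
    have e1 : b (N₁ + (n - N₁)) = b (N₁ + N₂) := hN₂ (n - N₁) (by omega)
    have e2 : b (N₁ + (n + 1 - N₁)) = b (N₁ + N₂) := hN₂ (n + 1 - N₁) (by omega)
    have e3 : N₁ + (n - N₁) = n := by omega
    have e4 : N₁ + (n + 1 - N₁) = n + 1 := by omega
    rw [e3] at e1
    rw [e4] at e2
    rw [e1, e2]
  have hbs := hbij n hn1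
  haveI := hRfin n
  haveI := hRfin (n + 1)
  have hΦ : Function.Bijective (fun p : Σ r, ((F.obj n).rel r : Set _) =>
      (⟨p.1, ⟨fun i => (F.map (homOfLE (Nat.le_succ n))).app _ (p.2.1 i),
        (F.map (homOfLE (Nat.le_succ n))).map_rel p.1 p.2.1 p.2.2⟩⟩ :
        Σ r, ((F.obj (n + 1)).rel r : Set _))) := by
    rw [Nat.bijective_iff_injective_and_card]
    refine ⟨?_, hb1⟩
    rintro ⟨r1, t1, ht1⟩ ⟨r2, t2, ht2⟩ hh
    dsimp only at hh
    obtain ⟨h1, h2⟩ := Sigma.ext_iff.mp hh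
    obtain rfl : r1 = r2 := h1
    have h2' := congrArg Subtype.val (eq_of_heq h2)
    have h3 : t1 = t2 := funext fun i => (hbs _).injective (congrFun h2' i)
    cases h3
    rfl
  have hrelsurj : ∀ (r : σ.R) (t : ∀ i, (F.obj (n + 1)).carrier (σ.sorts r i)),
      t ∈ (F.obj (n + 1)).rel r →
      ∃ t', t' ∈ (F.obj n).rel r ∧
        (fun i => (F.map (homOfLE (Nat.le_succ n))).app _ (t' i)) = t := by
    intro r t ht
    obtain ⟨⟨r', t', ht'⟩, hp⟩ := hΦ.surjective ⟨r, t, ht⟩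
    dsimp only at hp
    obtain ⟨h1, h2⟩ := Sigma.ext_iff.mp hp
    obtain rfl : r' = r := h1
    exact ⟨t', ht', congrArg Subtype.val (eq_of_heq h2)⟩
  let g : F.obj (n + 1) ⟶ F.obj n :=
    { app := fun s => Function.surjInv (hbs s).surjective
      map_rel := fun r t ht => by
        obtain ⟨t', ht', he⟩ := hrelsurj r t ht
        have h3 : (fun i => Function.surjInv (hbs (σ.sorts r i)).surjective (t i)) = t' := by
          funext i
          apply (hbs (σ.sorts r i)).injective
          rw [Function.surjInv_eq (hbs (σ.sorts r i)).surjective (t i)]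
          exact (congrFun he i).symm
        show (fun i => Function.surjInv (hbs (σ.sorts r i)).surjective (t i)) ∈ (F.obj n).rel r
        rw [h3]
        exact ht' }
  refine ⟨⟨g, ?_, ?_⟩⟩
  · refine RelMor.ext ?_
    funext s x
    exact (hbs s).injective
      (Function.surjInv_eq (hbs s).surjective ((F.map (homOfLE (Nat.le_succ n))).app s x))
  · refine RelMor.ext ?_
    funext s x
    exact Function.surjInv_eq (hbs s).surjective x
end

section
/- Let g : X → Y be a morphism of algebraic structures (relational structures in which every function symbol is interpreted as the graph of a partial function) such that X is total over Y, i.e., whenever f_Y(g(x₁),…,g(x_n)) is defined for a function symbol f and elements x_i of X, then f_X(x₁,…,x_n) is defined. Then g is an epimorphism in the category Alg of algebraic structures if and only if g is sort-wise surjective. -/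
open CategoryTheory

/-- An algebraic signature: sorts, predicate symbols with arities, and function symbols
with argument sorts and an output sort. -/
structure AlgSig where
  S : Type
  P : Type
  F : Type
  pn : P → ℕ
  psorts : ∀ p : P, Fin (pn p) → S
  fn : F → ℕ
  fsorts : ∀ f : F, Fin (fn f) → S
  fout : F → S

/-- An algebraic structure: a relational structure over the underlying relational
signature in which every function symbol is interpreted as the graph of a partial
function. -/
structure AlgStr (σ : AlgSig) where
  carrier : σ.S → Type
  prel : ∀ p : σ.P, Set (∀ i, carrier (σ.psorts p i))
  frel : ∀ f : σ.F, Set ((∀ i, carrier (σ.fsorts f i)) × carrier (σ.fout f))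
  functional : ∀ f x y₁ y₂, (x, y₁) ∈ frel f → (x, y₂) ∈ frel f → y₁ = y₂

variable {σ : AlgSig}

/-- A morphism of algebraic structures: a morphism of the underlying relational
structures. -/
@[ext]
structure AlgMor (X Y : AlgStr σ) where
  app : ∀ s, X.carrier s → Y.carrier s
  map_prel : ∀ p t, t ∈ X.prel p → (fun i => app _ (t i)) ∈ Y.prel p
  map_frel : ∀ f x y, (x, y) ∈ X.frel f → ((fun i => app _ (x i)), app _ y) ∈ Y.frel f

/-- The category of algebraic structures. -/
instance : Category (AlgStr σ) where
  Hom := AlgMor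
  id X := ⟨fun _ x => x, fun _ _ ht => ht, fun _ _ _ ht => ht⟩
  comp f g :=
    ⟨fun s x => g.app s (f.app s x),
     fun p t ht => g.map_prel p _ (f.map_prel p t ht),
     fun r x y ht => g.map_frel r _ _ (f.map_frel r x y ht)⟩
  id_comp _ := rfl
  comp_id _ := rfl
  assoc _ _ _ := rfl

/-- `X` is total over `Y` with respect to `g` if whenever a function symbol is defined
on the image of a tuple, it is already defined on the tuple itself. -/
def TotalOver {X Y : AlgStr σ} (g : X ⟶ Y) : Prop :=
  ∀ (f : σ.F) (x : ∀ i, X.carrier (σ.fsorts f i)),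
    (∃ y, ((fun i => g.app _ (x i)), y) ∈ Y.frel f) → ∃ y', (x, y') ∈ X.frel f

section Aux

variable {X Y : AlgStr σ}

/-- Gluing relation on `Y ⊕ Y`: the two copies of `y` are identified when `y` is in
the image of `g`. -/
def auxR (g : X ⟶ Y) (s : σ.S) (a b : Y.carrier s ⊕ Y.carrier s) : Prop :=
  ∃ y, a = Sum.inl y ∧ b = Sum.inr y ∧ y ∈ Set.range (g.app s)

open Classical in
/-- Normal form map. -/
noncomputable def auxC (g : X ⟶ Y) (s : σ.S) :
    (Y.carrier s ⊕ Y.carrier s) → (Y.carrier s ⊕ Y.carrier s)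
  | .inl a => .inl a
  | .inr a => if a ∈ Set.range (g.app s) then .inl a else .inr a

lemma auxC_resp (g : X ⟶ Y) (s : σ.S) {a b : Y.carrier s ⊕ Y.carrier s}
    (hab : auxR g s a b) : auxC g s a = auxC g s b := by
  obtain ⟨y, rfl, rfl, hy⟩ := hab
  simp [auxC, hy]

lemma auxQ_eq (g : X ⟶ Y) (s : σ.S) {a b : Y.carrier s ⊕ Y.carrier s}
    (hab : Quot.mk (auxR g s) a = Quot.mk (auxR g s) b) : auxC g s a = auxC g s b :=
  congrArg (Quot.lift (auxC g s) (fun _ _ => auxC_resp g s)) hab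

lemma auxQ_inl_inl (g : X ⟶ Y) (s : σ.S) {a b : Y.carrier s}
    (hab : Quot.mk (auxR g s) (.inl a) = Quot.mk (auxR g s) (.inl b)) : a = b := by
  have := auxQ_eq g s hab
  simpa [auxC] using this

lemma auxQ_inr_inr (g : X ⟶ Y) (s : σ.S) {a b : Y.carrier s}
    (hab : Quot.mk (auxR g s) (.inr a) = Quot.mk (auxR g s) (.inr b)) : a = b := by
  have := auxQ_eq g s hab
  by_cases ha : a ∈ Set.range (g.app s) <;> by_cases hb : b ∈ Set.range (g.app s) <;>
    simp [auxC, ha, hb] at this <;> exact this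

lemma auxQ_inl_inr (g : X ⟶ Y) (s : σ.S) {a b : Y.carrier s}
    (hab : Quot.mk (auxR g s) (.inl a) = Quot.mk (auxR g s) (.inr b)) :
    a = b ∧ b ∈ Set.range (g.app s) := by
  have := auxQ_eq g s hab
  by_cases hb : b ∈ Set.range (g.app s)
  · simp [auxC, hb] at this
    exact ⟨this, hb⟩
  · simp [auxC, hb] at this

/-- The amalgam of two copies of `Y` over the image of `g`. -/
noncomputable def auxZ (g : X ⟶ Y) (h : TotalOver g) : AlgStr σ where
  carrier s := Quot (auxR g s)
  prel p := { t | (∃ t' ∈ Y.prel p, ∀ i, t i = Quot.mk _ (.inl (t' i))) ∨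
                  (∃ t' ∈ Y.prel p, ∀ i, t i = Quot.mk _ (.inr (t' i))) }
  frel f := { q | (∃ x y, (x, y) ∈ Y.frel f ∧ (∀ i, q.1 i = Quot.mk _ (.inl (x i))) ∧
                    q.2 = Quot.mk _ (.inl y)) ∨
                  (∃ x y, (x, y) ∈ Y.frel f ∧ (∀ i, q.1 i = Quot.mk _ (.inr (x i))) ∧
                    q.2 = Quot.mk _ (.inr y)) }
  functional := by
    rintro f x y₁ y₂ (⟨a, b, hab, hx, rfl⟩ | ⟨a, b, hab, hx, rfl⟩)
      (⟨a', b', hab', hx', rfl⟩ | ⟨a', b', hab', hx', rfl⟩)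
    · have : a = a' := funext fun i => auxQ_inl_inl g _ ((hx i).symm.trans (hx' i))
      subst this
      exact congrArg _ (congrArg Sum.inl (Y.functional f a b b' hab hab'))
    · -- left lift and right lift
      have key : ∀ i, a i = a' i ∧ a' i ∈ Set.range (g.app _) := fun i =>
        auxQ_inl_inr g _ ((hx i).symm.trans (hx' i))
      have hsur : ∀ i, ∃ xi, g.app _ xi = a i := fun i => by
        obtain ⟨heq, ⟨xi, hxi⟩⟩ := key i
        exact ⟨xi, by rw [hxi, heq]⟩
      choose xt hxt using hsur
      have haeq : (fun i => g.app _ (xt i)) = a := funext hxt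
      obtain ⟨y', hy'⟩ := h f xt ⟨b, by rw [haeq]; exact hab⟩
      have him := g.map_frel f xt y' hy'
      rw [haeq] at him
      have hb : b = g.app _ y' := Y.functional f a b _ hab him
      have haa' : a = a' := funext fun i => (key i).1
      have hb' : b' = g.app _ y' := Y.functional f a' b' _ hab' (haa' ▸ him)
      refine Quot.sound ⟨g.app _ y', ?_, ?_, ⟨y', rfl⟩⟩ <;> simp [hb, hb']
    · -- right lift and left lift (symmetric)
      have key : ∀ i, a' i = a i ∧ a i ∈ Set.range (g.app _) := fun i =>
        auxQ_inl_inr g _ ((hx' i).symm.trans (hx i))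
      have hsur : ∀ i, ∃ xi, g.app _ xi = a' i := fun i => by
        obtain ⟨heq, ⟨xi, hxi⟩⟩ := key i
        exact ⟨xi, by rw [hxi, heq]⟩
      choose xt hxt using hsur
      have haeq : (fun i => g.app _ (xt i)) = a' := funext hxt
      obtain ⟨y', hy'⟩ := h f xt ⟨b', by rw [haeq]; exact hab'⟩
      have him := g.map_frel f xt y' hy'
      rw [haeq] at him
      have hb' : b' = g.app _ y' := Y.functional f a' b' _ hab' him
      have haa' : a' = a := funext fun i => (key i).1
      have hb : b = g.app _ y' := Y.functional f a b _ hab (haa' ▸ him)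
      exact (Quot.sound ⟨g.app _ y', by simp [hb'], by simp [hb], ⟨y', rfl⟩⟩).symm
    · have : a = a' := funext fun i => auxQ_inr_inr g _ ((hx i).symm.trans (hx' i))
      subst this
      exact congrArg _ (congrArg Sum.inr (Y.functional f a b b' hab hab'))

/-- Left inclusion `Y ⟶ auxZ`. -/
noncomputable def auxI₁ (g : X ⟶ Y) (h : TotalOver g) : Y ⟶ auxZ g h where
  app s y := Quot.mk _ (.inl y)
  map_prel p t ht := Or.inl ⟨t, ht, fun _ => rfl⟩
  map_frel f x y hxy := Or.inl ⟨x, y, hxy, fun _ => rfl, rfl⟩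

/-- Right inclusion `Y ⟶ auxZ`. -/
noncomputable def auxI₂ (g : X ⟶ Y) (h : TotalOver g) : Y ⟶ auxZ g h where
  app s y := Quot.mk _ (.inr y)
  map_prel p t ht := Or.inr ⟨t, ht, fun _ => rfl⟩
  map_frel f x y hxy := Or.inr ⟨x, y, hxy, fun _ => rfl, rfl⟩

end Aux

/-- If `X` is total over `Y`, then `g : X ⟶ Y` is an epimorphism of algebraic
structures iff it is sort-wise surjective. -/
theorem stmt_18 {X Y : AlgStr σ} (g : X ⟶ Y) (h : TotalOver g) :
    Epi g ↔ ∀ s, Function.Surjective (g.app s) := by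
  constructor
  · intro hepi s y
    have hcomp : g ≫ auxI₁ g h = g ≫ auxI₂ g h := by
      apply AlgMor.ext
      funext s x
      exact Quot.sound ⟨g.app s x, rfl, rfl, ⟨x, rfl⟩⟩
    have := hepi.left_cancellation _ _ hcomp
    have happ : Quot.mk (auxR g s) (.inl y) = Quot.mk (auxR g s) (.inr y) :=
      congrFun (congrFun (congrArg AlgMor.app this) s) y
    exact (auxQ_inl_inr g s happ).2
  · intro hsurj
    constructor
    intro W u v huv
    apply AlgMor.ext
    funext s y
    obtain ⟨x, rfl⟩ := hsurj s y
    exact congrFun (congrFun (congrArg AlgMor.app huv) s) x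
end
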